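/- Conditional unbiasedness of CBPS under a linear outcome model: suppose the CBPS balancing condition ∑_{T_i=0} r_i X_i = ∑_{T_i=1} X_i holds, where r_i = π̂(X_i)/(1−π̂(X_i)) are functions of the covariates and treatments only, and suppose m0 is linear (m0(x) = aᵀx). Under ignorability, conditional on {(X_i, T_i)}, the expectation of (1/n1)∑_{T_i=1} Y_i − (1/n1)∑_{T_i=0} r_i Y_i equals (1/n1)∑_{T_i=1}(m1(X_i) − m0(X_i)), i.e., the sample ATT. -/

import Mathlib

open Finset MeasureTheory

/-!
Conditionally on the design, the estimator is linear in the outcomes, so its expectation is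
`(1/n₁) (∑_{T=1} m₁(Xᵢ) - ∑_{T=0} rᵢ m₀(Xᵢ))`. Since `m₀` is linear, the balancing condition on
the covariates transfers to `m₀`: `∑_{T=0} rᵢ m₀(Xᵢ) = ∑_{T=1} m₀(Xᵢ)`.
-/

theorem Finset.sum_mul_dotProduct_eq_of_balance {ι κ : Type*} [Fintype κ] (s t : Finset ι)
    (r : ι → ℝ) (x : ι → κ → ℝ) (a : κ → ℝ)
    (hbal : ∀ j, ∑ i ∈ s, r i * x i j = ∑ i ∈ t, x i j) :
    ∑ i ∈ s, r i * ∑ j, a j * x i j = ∑ i ∈ t, ∑ j, a j * x i j := by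
  calc ∑ i ∈ s, r i * ∑ j, a j * x i j
      = ∑ j, a j * ∑ i ∈ s, r i * x i j := by
        simp only [mul_sum]
        rw [sum_comm]
        exact sum_congr rfl fun j _ => sum_congr rfl fun i _ => by ring
    _ = ∑ i ∈ t, ∑ j, a j * x i j := by
        simp only [hbal, mul_sum]
        exact sum_comm

theorem stmt_13_general {Ω : Type*} [MeasurableSpace Ω] (μ : Measure Ω)
    {n d : ℕ} (T : Fin n → Bool) (X : Fin n → (Fin d → ℝ))
    (Y : Fin n → Ω → ℝ) (m0 m1 : (Fin d → ℝ) → ℝ) (r : Fin n → ℝ) (a : Fin d → ℝ)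
    (n1 : ℕ)
    (hYint : ∀ i, Integrable (Y i) μ)
    (hmean : ∀ i, ∫ ω, Y i ω ∂μ = if T i = true then m1 (X i) else m0 (X i))
    (hm0lin : ∀ x, m0 x = ∑ j, a j * x j)
    (hbal : ∀ j, ∑ i ∈ univ.filter (fun i => T i = false), r i * X i j
      = ∑ i ∈ univ.filter (fun i => T i = true), X i j) :
    ∫ ω, ((1 / (n1 : ℝ)) * ∑ i ∈ univ.filter (fun i => T i = true), Y i ω
        - (1 / (n1 : ℝ)) * ∑ i ∈ univ.filter (fun i => T i = false), r i * Y i ω) ∂μ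
      = (1 / (n1 : ℝ)) * ∑ i ∈ univ.filter (fun i => T i = true), (m1 (X i) - m0 (X i)) := by
  have hint_control i : Integrable (fun ω => r i * Y i ω) μ := (hYint i).const_mul _
  have htreated : ∑ i ∈ univ.filter (fun i => T i = true), ∫ ω, Y i ω ∂μ
      = ∑ i ∈ univ.filter (fun i => T i = true), m1 (X i) :=
    sum_congr rfl fun i hi => by rw [hmean i, if_pos (mem_filter.mp hi).2]
  have hcontrol : ∑ i ∈ univ.filter (fun i => T i = false), ∫ ω, r i * Y i ω ∂μ
      = ∑ i ∈ univ.filter (fun i => T i = true), m0 (X i) := by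
    calc _ = ∑ i ∈ univ.filter (fun i => T i = false), r i * m0 (X i) :=
          sum_congr rfl fun i hi => by
            rw [integral_const_mul, hmean i, if_neg (by simp [(mem_filter.mp hi).2])]
      _ = _ := by
          simp only [hm0lin]
          exact sum_mul_dotProduct_eq_of_balance _ _ r X a hbal
  rw [integral_sub ((integrable_finsetSum _ fun i _ => hYint i).const_mul _)
      ((integrable_finsetSum _ fun i _ => hint_control i).const_mul _),
    integral_const_mul, integral_const_mul, integral_finsetSum _ fun i _ => hYint i,
    integral_finsetSum _ fun i _ => hint_control i, htreated, hcontrol, ← mul_sub,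
    ← sum_sub_distrib]

/-- Conditional unbiasedness of CBPS under a linear outcome model: conditioning on
the covariates and treatments (so that they and the odds weights `r_i` are fixed),
if the CBPS balancing condition holds and `m0(x) = aᵀx`, then the expectation of the
weighted estimator equals the sample ATT. -/
theorem stmt_13 {Ω : Type*} [MeasurableSpace Ω] (μ : Measure Ω) [IsProbabilityMeasure μ]
    {n d : ℕ} (T : Fin n → Bool) (X : Fin n → (Fin d → ℝ))
    (Y : Fin n → Ω → ℝ) (m0 m1 : (Fin d → ℝ) → ℝ) (r : Fin n → ℝ) (a : Fin d → ℝ)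
    (n1 : ℕ) (hn1 : n1 = (univ.filter (fun i => T i = true)).card) (hn1pos : 0 < n1)
    (hYint : ∀ i, Integrable (Y i) μ)
    (hmean : ∀ i, ∫ ω, Y i ω ∂μ = if T i = true then m1 (X i) else m0 (X i))
    (hm0lin : ∀ x, m0 x = ∑ j, a j * x j)
    (hbal : ∀ j, ∑ i ∈ univ.filter (fun i => T i = false), r i * X i j
      = ∑ i ∈ univ.filter (fun i => T i = true), X i j) :
    ∫ ω, ((1 / (n1 : ℝ)) * ∑ i ∈ univ.filter (fun i => T i = true), Y i ω
        - (1 / (n1 : ℝ)) * ∑ i ∈ univ.filter (fun i => T i = false), r i * Y i ω) ∂μ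
      = (1 / (n1 : ℝ)) * ∑ i ∈ univ.filter (fun i => T i = true), (m1 (X i) - m0 (X i)) :=
  stmt_13_general μ T X Y m0 m1 r a n1 hYint hmean hm0lin hbal
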